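/- For every m ≥ 1 and every α with 1 ≤ α ≤ m, the number of Ferrers diagrams λ ⊆ ℕ^m with exactly 2m + 1 elements that contain μ_m, such that every component of λ ∖ μ_m contains an element that is not of type 1, and such that λ ∖ μ_m contains exactly α elements of type 2, equals C(m−1, α−1) · m^(m−α). -/

import Mathlib

/-- A Ferrers diagram in `ℕ^k`: a finite nonempty downward-closed subset of `Fin k → ℕ`. -/
def IsFerrers {k : ℕ} (F : Finset (Fin k → ℕ)) : Prop :=
  F.Nonempty ∧ ∀ a ∈ F, ∀ x : Fin k → ℕ, (∀ i, x i ≤ a i) → x ∈ F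

/-- A Ferrers diagram is strict if every coordinate is used by some element. -/
def IsStrict {k : ℕ} (F : Finset (Fin k → ℕ)) : Prop :=
  ∀ i : Fin k, ∃ a ∈ F, a i ≠ 0

/-- `numPart d n` = `p_d(n)`, the number of Ferrers diagrams in `ℕ^(d+1)` with `n` elements. -/
noncomputable def numPart (d n : ℕ) : ℕ :=
  Nat.card {F : Finset (Fin (d + 1) → ℕ) // IsFerrers F ∧ F.card = n}

/-- `Amat n r` = `a_{n,r}`, the number of strict Ferrers diagrams in `ℕ^r` with `n` elements. -/
noncomputable def Amat (n r : ℕ) : ℕ :=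
  Nat.card {F : Finset (Fin r → ℕ) // IsFerrers F ∧ IsStrict F ∧ F.card = n}

/-- `mu r` = `μ_r = {0, e_1, …, e_r} ⊆ ℕ^r`. -/
def mu (r : ℕ) : Finset (Fin r → ℕ) :=
  insert 0 (Finset.univ.image fun i => Pi.single i 1)

/-- The reduced dimension of a Ferrers diagram `F ⊆ ℕ^x` (containing `μ_x`): the number of
coordinates used by some element of `F \ μ_x`. -/
noncomputable def rdim {x : ℕ} (F : Finset (Fin x → ℕ)) : ℕ :=
  Nat.card {i : Fin x // ∃ a ∈ F \ mu x, a i ≠ 0}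

/-- Two coordinates are touched by a common element of the skew diagram `σ`. -/
def Touches {x : ℕ} (σ : Finset (Fin x → ℕ)) (i j : Fin x) : Prop :=
  ∃ a ∈ σ, a i ≠ 0 ∧ a j ≠ 0

/-- `B` is a block of the finest partition of `Fin x` compatible with `σ`,
i.e. an equivalence class of the equivalence relation generated by `Touches σ`. -/
def IsBlock {x : ℕ} (σ : Finset (Fin x → ℕ)) (B : Set (Fin x)) : Prop :=
  ∃ i : Fin x, B = {j | Relation.EqvGen (Touches σ) i j}

/-- The support of `a` is contained in `B`. -/
def SuppIn {x : ℕ} (a : Fin x → ℕ) (B : Set (Fin x)) : Prop :=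
  ∀ i, a i ≠ 0 → i ∈ B

/-- The component of `σ` with block `B` is of type `σ₂`: `B = {i, j}` with `i ≠ j`, and the
elements of `σ` supported in `B` are exactly `{e_i + e_j}`. -/
def IsSigma2 {x : ℕ} (σ : Finset (Fin x → ℕ)) (B : Set (Fin x)) : Prop :=
  ∃ i j : Fin x, i ≠ j ∧ B = {i, j} ∧
    {a ∈ (σ : Set (Fin x → ℕ)) | SuppIn a B} = {Pi.single i 1 + Pi.single j 1}

/-- `Cmat m x` = `c_{m,x}`. -/
noncomputable def Cmat (m x : ℕ) : ℕ :=
  Nat.card {F : Finset (Fin x → ℕ) //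
    IsFerrers F ∧ mu x ⊆ F ∧ F.card = m + x + 1 ∧ rdim F = x}

/-- `Dmat m x` = `d_{m,x}`. -/
noncomputable def Dmat (m x : ℕ) : ℕ :=
  Nat.card {F : Finset (Fin x → ℕ) //
    IsFerrers F ∧ mu x ⊆ F ∧ F.card = m + x + 1 ∧ rdim F = x ∧
      ∀ B : Set (Fin x), IsBlock (F \ mu x) B → ¬ IsSigma2 (F \ mu x) B}

/-- A point of type 1: `e_i + e_j` for some `i ≠ j`. -/
def IsType1 {r : ℕ} (a : Fin r → ℕ) : Prop :=
  ∃ i j : Fin r, i ≠ j ∧ a = Pi.single i 1 + Pi.single j 1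

/-- A point of type 2: `2·e_i` for some `i`. -/
def IsType2 {r : ℕ} (a : Fin r → ℕ) : Prop :=
  ∃ i : Fin r, a = Pi.single i 2

/-- `Fmat n r` = `f_{n,r}`. -/
noncomputable def Fmat (n r : ℕ) : ℕ :=
  Nat.card {F : Finset (Fin r → ℕ) //
    IsFerrers F ∧ mu r ⊆ F ∧ F.card = n ∧
      ∀ B : Set (Fin r), IsBlock (F \ mu r) B →
        ∃ a ∈ F \ mu r, SuppIn a B ∧ ¬ IsType1 a}


/-!
Sending the parent map `f : Fin m → Fin m` of a rooted forest (roots = fixed points) to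
`μ_m ∪ {e_v + e_{f v}}` is a bijection onto the diagrams being counted, under which the roots
become the type-2 points. For surjectivity, choose in every component of `λ ∖ μ_m` a non-type-1
point and a root in its support, and orient a spanning forest of the graph of type-1 points
towards these roots. The `m` points `e_v + e_{f v}` (`v` not a root) and the chosen points are
distinct, so they fill the `m`-point skew diagram; hence every chosen point is `2 e_r`, since one
with `0/1` entries would lie above a triangle of type-1 points.

The number `N k` of rooted forests with `k` roots satisfies `N (k + 1) * (k * m) = N k * (m - k)`
(redirect a root into another tree); with `N m = 1` this gives `C(m - 1, k - 1) * m ^ (m - k)`.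
-/

open Function Finset

section ForestMap

variable {V : Type*} {f : V → V}

/-- Parent maps of rooted forests on `V`; the roots are the fixed points. -/
def IsForestMap (f : V → V) : Prop := ∀ v, ∃ n, IsFixedPt f (f^[n] v)

theorem isForestMap_of_lt (d : V → ℕ) (hd : ∀ v, f v ≠ v → d (f v) < d v) :
    IsForestMap f := by
  intro v
  induction h : d v using Nat.strong_induction_on generalizing v with
  | _ n ih =>
    by_cases hv : f v = v
    · exact ⟨0, hv⟩
    · obtain ⟨k, hk⟩ := ih _ (h ▸ hd v hv) (f v) rfl
      exact ⟨k + 1, by rwa [iterate_succ_apply]⟩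

namespace IsForestMap

theorem isFixedPt_of_isPeriodicPt (hf : IsForestMap f) {v : V} {n : ℕ}
    (hv : IsPeriodicPt f n v) (hn : 0 < n) : IsFixedPt f v := by
  obtain ⟨k, hk⟩ := hf v
  rw [← (hv.mul_const k).eq, ← Nat.sub_add_cancel (Nat.le_mul_of_pos_left k hn),
    iterate_add_apply, iterate_fixed hk]
  exact hk

theorem eq_of_apply_apply_eq (hf : IsForestMap f) {v : V} (h : f (f v) = v) : f v = v :=
  hf.isFixedPt_of_isPeriodicPt (n := 2) h two_pos

theorem isFixedPt_iterate_card [Fintype V] (hf : IsForestMap f) (v : V) :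
    IsFixedPt f (f^[Fintype.card V] v) := by
  obtain ⟨i, j, hij, hfij⟩ := Fintype.exists_ne_map_eq_of_card_lt
    (fun t : Fin (Fintype.card V + 1) => f^[t] v) (by simp)
  wlog hlt : i < j generalizing i j
  · exact this j i hij.symm hfij.symm (lt_of_le_of_ne (not_lt.mp hlt) hij.symm)
  have hper : IsPeriodicPt f (j - i) (f^[i] v) := by
    rw [IsPeriodicPt, IsFixedPt, ← iterate_add_apply, Nat.sub_add_cancel hlt.le]
    exact hfij.symm
  have hfix := hf.isFixedPt_of_isPeriodicPt hper (Nat.sub_pos_of_lt hlt)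
  rw [← Nat.sub_add_cancel (Nat.lt_succ_iff.mp i.isLt), iterate_add_apply, iterate_fixed hfix]
  exact hfix

end IsForestMap

variable [Fintype V]

/-- The root of the tree of `v`: for a forest map, `card V` steps always reach it. -/
def forestRoot (f : V → V) (v : V) : V := f^[Fintype.card V] v

theorem IsForestMap.isFixedPt_forestRoot (hf : IsForestMap f) (v : V) :
    IsFixedPt f (forestRoot f v) :=
  hf.isFixedPt_iterate_card v

theorem forestRoot_eq_self {v : V} (hv : IsFixedPt f v) : forestRoot f v = v :=
  iterate_fixed hv _

theorem IsForestMap.forestRoot_apply (hf : IsForestMap f) (v : V) :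
    forestRoot f (f v) = forestRoot f v := by
  rw [forestRoot, ← iterate_succ_apply, iterate_succ_apply']
  exact hf.isFixedPt_forestRoot v

theorem IsForestMap.forestRoot_iterate (hf : IsForestMap f) (v : V) (n : ℕ) :
    forestRoot f (f^[n] v) = forestRoot f v := by
  induction n with
  | zero => rfl
  | succ n ih => rw [iterate_succ_apply', hf.forestRoot_apply, ih]

theorem IsForestMap.iterate_ne_of_forestRoot_ne (hf : IsForestMap f) {r u : V}
    (hr : IsFixedPt f r) (hu : forestRoot f u ≠ r) (n : ℕ) : f^[n] u ≠ r := by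
  intro h
  rw [← hf.forestRoot_iterate u n, h, forestRoot_eq_self hr] at hu
  exact hu rfl

end ForestMap

/-- Orienting every vertex outside `R` towards a neighbour closer to `R` gives a spanning forest
rooted at `R`. -/
theorem SimpleGraph.exists_isForestMap {V : Type*} (G : SimpleGraph V) (R : Set V)
    (hR : ∀ v, ∃ r ∈ R, G.Reachable v r) :
    ∃ f : V → V, IsForestMap f ∧ (∀ v ∈ R, f v = v) ∧ ∀ v ∉ R, G.Adj v (f v) := by
  classical
  have hwalk (v : V) : ∃ n, ∃ r ∈ R, ∃ p : G.Walk v r, p.length = n := by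
    obtain ⟨r, hr, ⟨p⟩⟩ := hR v
    exact ⟨_, r, hr, p, rfl⟩
  let d v := Nat.find (hwalk v)
  have hstep (v : V) (hv : v ∉ R) : ∃ u, G.Adj v u ∧ d u < d v := by
    obtain ⟨r, hr, p, hp⟩ := Nat.find_spec (hwalk v)
    cases p with
    | nil => exact absurd hr hv
    | cons h q =>
      refine ⟨_, h, (Nat.find_min' (hwalk _) ⟨r, hr, q, rfl⟩).trans_lt ?_⟩
      simp only [SimpleGraph.Walk.length_cons] at hp
      change _ < Nat.find (hwalk v)
      omega
  choose! next hadj hlt using hstep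
  refine ⟨fun v => if v ∈ R then v else next v, isForestMap_of_lt d fun v hv => ?_,
    fun v hv => if_pos hv, fun v hv => by simpa [hv] using hadj v hv⟩
  by_cases h : v ∈ R
  · simp [h] at hv
  · simpa [h] using hlt v h

section Update

variable {V : Type*} [DecidableEq V] {f : V → V} {r u : V}

theorem iterate_update_of_forall_lt_ne {v : V} {n : ℕ} (hv : ∀ k < n, f^[k] v ≠ r) :
    (update f r u)^[n] v = f^[n] v := by
  induction n with
  | zero => rfl
  | succ n ih =>
    rw [iterate_succ_apply', iterate_succ_apply', ih (fun k hk => hv k (by omega)),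
      update_of_ne (hv n (by omega))]

theorem IsForestMap.update (hf : IsForestMap f) (hu : u = r ∨ ∀ n, f^[n] u ≠ r) :
    IsForestMap (Function.update f r u) := by
  have of_avoids (v : V) (hv : ∀ n, f^[n] v ≠ r) :
      ∃ n, IsFixedPt (Function.update f r u) ((Function.update f r u)^[n] v) := by
    obtain ⟨n, hn⟩ := hf v
    refine ⟨n, ?_⟩
    rw [iterate_update_of_forall_lt_ne (fun k _ => hv k), IsFixedPt, update_of_ne (hv n)]
    exact hn
  intro v
  by_cases hr : ∃ n, f^[n] v = r
  · have ht : (Function.update f r u)^[Nat.find hr] v = r := by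
      rw [iterate_update_of_forall_lt_ne (fun k hk => Nat.find_min hr hk)]
      exact Nat.find_spec hr
    rcases hu with rfl | hu
    · exact ⟨Nat.find hr, by rw [ht, IsFixedPt, update_self]⟩
    · obtain ⟨n, hn⟩ := of_avoids u hu
      refine ⟨n + (Nat.find hr + 1), ?_⟩
      rwa [iterate_add_apply, iterate_succ_apply', ht, update_self]
  · push Not at hr
    exact of_avoids v hr

variable [Fintype V]

theorem IsForestMap.forestRoot_update_self_ne (hf : IsForestMap f) (hr : ¬IsFixedPt f r) :
    forestRoot (Function.update f r r) (f r) ≠ r := by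
  have havoid (n : ℕ) : f^[n] (f r) ≠ r := fun h =>
    hr (hf.isFixedPt_of_isPeriodicPt (n := n + 1)
      (by rwa [IsPeriodicPt, IsFixedPt, iterate_succ_apply]) n.succ_pos)
  rw [forestRoot, iterate_update_of_forall_lt_ne (fun k _ => havoid k)]
  exact havoid _

def roots (f : V → V) : Finset V := {v | IsFixedPt f v}

@[simp] theorem mem_roots {v : V} : v ∈ roots f ↔ IsFixedPt f v := by
  simp [roots]

theorem roots_update_self (f : V → V) (r : V) : roots (update f r r) = insert r (roots f) := by
  ext v
  by_cases hv : v = r <;> simp [IsFixedPt, hv]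

theorem roots_update_of_ne (f : V → V) (hu : u ≠ r) :
    roots (update f r u) = (roots f).erase r := by
  ext v
  by_cases hv : v = r <;> simp [IsFixedPt, hv, hu]

end Update

section Count

variable {V : Type*} [Fintype V] [DecidableEq V]

variable (V) in
open Classical in
noncomputable def forestMaps (k : ℕ) : Finset (V → V) :=
  {f | IsForestMap f ∧ #(roots f) = k}

theorem mem_forestMaps {k : ℕ} {f : V → V} :
    f ∈ forestMaps V k ↔ IsForestMap f ∧ #(roots f) = k := by
  simp [forestMaps]

theorem IsForestMap.card_forestRoot_ne {f : V → V} (hf : IsForestMap f) :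
    #{ru ∈ roots f ×ˢ univ | forestRoot f ru.2 ≠ ru.1} + Fintype.card V =
      #(roots f) * Fintype.card V := by
  have hroots : #{ru ∈ roots f ×ˢ univ | forestRoot f ru.2 = ru.1} = Fintype.card V := by
    rw [← card_univ]
    refine card_nbij' Prod.snd (fun u => (forestRoot f u, u)) (by simp) ?_ ?_ (fun _ _ => rfl)
    · intro u _
      simpa using hf.isFixedPt_forestRoot u
    · rintro ⟨r, u⟩ hru
      simp only [coe_filter, mem_product, Set.mem_ofPred_eq] at hru
      simp [hru.2]
  have := card_filter_add_card_filter_not (s := roots f ×ˢ univ)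
    fun ru : V × V => forestRoot f ru.2 = ru.1
  rw [hroots, card_product, card_univ] at this
  simpa [add_comm] using this

/-- Double counting through the bijection `(f, r, u) ↦ (update f r u, r)`, which redirects a
root `r` of `f` into the tree of `u`; its inverse `(g, c) ↦ (update g c c, c, g c)` cuts the
edge out of `c`. -/
theorem card_forestMaps_succ_mul (k : ℕ) :
    #(forestMaps V (k + 1)) * (k * Fintype.card V) =
      #(forestMaps V k) * (Fintype.card V - k) := by
  set A := (forestMaps V (k + 1)).sigma
    fun f => {ru ∈ roots f ×ˢ univ | forestRoot f ru.2 ≠ ru.1}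
  set B := (forestMaps V k).sigma fun g => (roots g)ᶜ
  have hA : #A = #(forestMaps V (k + 1)) * (k * Fintype.card V) := by
    rw [card_sigma, sum_const_nat]
    intro f hf
    obtain ⟨hf, hk⟩ := mem_forestMaps.mp hf
    have := hf.card_forestRoot_ne
    rw [hk] at this
    linarith
  have hB : #B = #(forestMaps V k) * (Fintype.card V - k) := by
    rw [card_sigma, sum_const_nat]
    intro g hg
    rw [card_compl, (mem_forestMaps.mp hg).2]
  rw [← hA, ← hB]
  refine card_nbij' (fun p => ⟨update p.1 p.2.1 p.2.2, p.2.1⟩)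
    (fun q => ⟨update q.1 q.2 q.2, (q.2, q.1 q.2)⟩) ?_ ?_ ?_ ?_
  · rintro ⟨f, r, u⟩ hp
    simp only [A, coe_sigma, Set.mem_sigma_iff, coe_filter, mem_product, mem_univ, and_true,
      mem_roots, mem_coe, mem_forestMaps, Set.mem_ofPred_eq] at hp
    obtain ⟨⟨hf, hk⟩, hr, hu⟩ := hp
    have hur : u ≠ r := by rintro rfl; exact hu (forestRoot_eq_self hr)
    simp only [B, coe_sigma, Set.mem_sigma_iff, mem_coe, mem_compl, mem_roots, mem_forestMaps]
    refine ⟨⟨hf.update (Or.inr (hf.iterate_ne_of_forestRoot_ne hr hu)), ?_⟩, ?_⟩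
    · rw [roots_update_of_ne f hur, card_erase_of_mem (mem_roots.mpr hr), hk,
        Nat.add_sub_cancel]
    · simpa [IsFixedPt] using hur
  · rintro ⟨g, c⟩ hq
    simp only [B, coe_sigma, Set.mem_sigma_iff, mem_coe, mem_compl, mem_roots,
      mem_forestMaps] at hq
    obtain ⟨⟨hg, hk⟩, hc⟩ := hq
    simp only [A, coe_sigma, Set.mem_sigma_iff, coe_filter, mem_product, mem_univ, and_true,
      mem_roots, mem_coe, mem_forestMaps, Set.mem_ofPred_eq]
    refine ⟨⟨hg.update (Or.inl rfl), ?_⟩, by simp [IsFixedPt],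
      hg.forestRoot_update_self_ne hc⟩
    rw [roots_update_self, card_insert_of_notMem (by simpa using hc), hk]
  · rintro ⟨f, r, u⟩ hp
    simp only [A, coe_sigma, Set.mem_sigma_iff, coe_filter, mem_product, mem_univ, and_true,
      mem_roots, mem_coe, Set.mem_ofPred_eq] at hp
    simpa using Eq.symm hp.2.1
  · rintro ⟨g, c⟩ -
    simp

theorem forestMaps_card : forestMaps V (Fintype.card V) = {id} := by
  ext f
  rw [mem_forestMaps, mem_singleton]
  constructor
  · rintro ⟨-, hf⟩
    funext v
    exact mem_roots.mp (eq_univ_of_card _ hf ▸ mem_univ v)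
  · rintro rfl
    exact ⟨fun v => ⟨0, rfl⟩, by simp [roots, IsFixedPt]⟩

theorem card_forestMaps {k : ℕ} (hk : 1 ≤ k) (hkn : k ≤ Fintype.card V) :
    #(forestMaps V k) =
      (Fintype.card V - 1).choose (k - 1) * Fintype.card V ^ (Fintype.card V - k) := by
  induction h : Fintype.card V - k generalizing k with
  | zero =>
    rw [show k = Fintype.card V by omega, forestMaps_card]
    simp
  | succ d ih =>
    obtain ⟨j, rfl⟩ : ∃ j, k = j + 1 := ⟨k - 1, by omega⟩
    have hrec := card_forestMaps_succ_mul (V := V) (j + 1)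
    rw [ih (by omega) (by omega) (by omega), h] at hrec
    have hchoose := Nat.choose_succ_right_eq (Fintype.card V - 1) j
    rw [show Fintype.card V - 1 - j = d + 1 by omega] at hchoose
    refine Nat.eq_of_mul_eq_mul_right (by omega : 0 < d + 1) (hrec.symm.trans ?_)
    simp only [Nat.add_sub_cancel]
    calc (Fintype.card V - 1).choose (j + 1) * Fintype.card V ^ d * ((j + 1) * Fintype.card V)
        = (Fintype.card V - 1).choose (j + 1) * (j + 1) * Fintype.card V ^ (d + 1) := by ring
      _ = _ := by rw [hchoose]; ring

end Count

section Points

theorem single_add_single_eq_iff {ι : Type*} [DecidableEq ι] {i j k l : ι} :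
    (Pi.single i 1 + Pi.single j 1 : ι → ℕ) = Pi.single k 1 + Pi.single l 1 ↔
      (i = k ∧ j = l) ∨ (i = l ∧ j = k) := by
  rw [Pi.single_add_single_eq_single_add_single one_ne_zero one_ne_zero]
  simp

variable {m : ℕ}

@[simp] theorem sum_single_add_single (i j : Fin m) :
    ∑ x, (Pi.single i 1 + Pi.single j 1 : Fin m → ℕ) x = 2 := by
  simp [sum_add_distrib]

theorem eq_of_le_of_sum_eq {a b : Fin m → ℕ} (hab : a ≤ b) (h : ∑ x, a x = ∑ x, b x) :
    a = b :=
  funext fun x => (sum_eq_sum_iff_of_le fun x _ => hab x).mp h x (mem_univ x)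

theorem mem_mu_iff {a : Fin m → ℕ} : a ∈ mu m ↔ ∑ x, a x ≤ 1 := by
  simp only [mu, mem_insert, mem_image, mem_univ, true_and]
  constructor
  · rintro (rfl | ⟨i, rfl⟩) <;> simp
  · intro h
    by_cases ha : a = 0
    · exact Or.inl ha
    obtain ⟨i, hi⟩ : ∃ i, a i ≠ 0 := by
      by_contra! h0
      exact ha (funext h0)
    refine Or.inr ⟨i, eq_of_le_of_sum_eq ?_ ?_⟩
    · intro x
      by_cases hx : x = i <;> simp [hx]
      omega
    · have : a i ≤ ∑ x, a x := single_le_sum (fun x _ => Nat.zero_le (a x)) (mem_univ i)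
      simp only [Pi.single_apply, sum_ite_eq', mem_univ, if_true]
      omega

theorem card_mu (m : ℕ) : #(mu m) = m + 1 := by
  rw [mu, card_insert_of_notMem, card_image_of_injective, card_univ, Fintype.card_fin]
  · intro i j h
    simpa [Pi.single_apply] using congrFun h i
  · simp

theorem single_add_single_notMem_mu (i j : Fin m) : Pi.single i 1 + Pi.single j 1 ∉ mu m := by
  rw [mem_mu_iff, sum_single_add_single]
  omega

theorem isType1_single_add_single {i j : Fin m} :
    IsType1 (Pi.single i 1 + Pi.single j 1 : Fin m → ℕ) ↔ i ≠ j := by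
  constructor
  · rintro ⟨k, l, hkl, h⟩
    rcases single_add_single_eq_iff.mp h with ⟨rfl, rfl⟩ | ⟨rfl, rfl⟩
    exacts [hkl, hkl.symm]
  · exact fun hij => ⟨i, j, hij, rfl⟩

theorem isType2_single_add_single {i j : Fin m} :
    IsType2 (Pi.single i 1 + Pi.single j 1 : Fin m → ℕ) ↔ i = j := by
  have h2 (k : Fin m) : (Pi.single k 2 : Fin m → ℕ) = Pi.single k 1 + Pi.single k 1 :=
    Pi.single_add k 1 1
  constructor
  · rintro ⟨k, h⟩
    rw [h2] at h
    rcases single_add_single_eq_iff.mp h with ⟨rfl, rfl⟩ | ⟨rfl, rfl⟩ <;> rfl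
  · rintro rfl
    exact ⟨i, (h2 i).symm⟩

theorem single_add_single_le {a : Fin m → ℕ} {i j : Fin m} (hij : i ≠ j) (hi : a i ≠ 0)
    (hj : a j ≠ 0) : Pi.single i 1 + Pi.single j 1 ≤ a := by
  intro x
  by_cases hxi : x = i <;> by_cases hxj : x = j <;> simp_all <;> omega

theorem single_add_single_self_le {a : Fin m → ℕ} {i : Fin m} (hi : 2 ≤ a i) :
    Pi.single i 1 + Pi.single i 1 ≤ a := by
  intro x
  by_cases hxi : x = i <;> simp_all

end Points

section ForestDiagram

variable {m : ℕ} {f g : Fin m → Fin m}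

/-- The roots of `f` give the type-2 points `e_v + e_v = 2 e_v`, its edges the type-1 points. -/
def forestDiagram (f : Fin m → Fin m) : Finset (Fin m → ℕ) :=
  mu m ∪ univ.image fun v => Pi.single v 1 + Pi.single (f v) 1

theorem mu_subset_forestDiagram (f : Fin m → Fin m) : mu m ⊆ forestDiagram f :=
  subset_union_left

theorem forestDiagram_sdiff_mu (f : Fin m → Fin m) :
    forestDiagram f \ mu m = univ.image fun v => Pi.single v 1 + Pi.single (f v) 1 := by
  refine union_sdiff_cancel_left (disjoint_left.mpr fun a ha hb => ?_)
  obtain ⟨v, -, rfl⟩ := mem_image.mp hb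
  exact single_add_single_notMem_mu _ _ ha

theorem isFerrers_forestDiagram (f : Fin m → Fin m) : IsFerrers (forestDiagram f) := by
  refine ⟨⟨0, mem_union_left _ (mem_insert_self _ _)⟩, fun a ha x hx => ?_⟩
  have hsum : ∑ i, x i ≤ ∑ i, a i := sum_le_sum fun i _ => hx i
  rcases mem_union.mp ha with ha | ha
  · exact mem_union_left _ (mem_mu_iff.mpr (hsum.trans (mem_mu_iff.mp ha)))
  · obtain ⟨v, -, rfl⟩ := mem_image.mp ha
    rw [sum_single_add_single] at hsum
    by_cases hx1 : ∑ i, x i ≤ 1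
    · exact mem_union_left _ (mem_mu_iff.mpr hx1)
    · rw [eq_of_le_of_sum_eq hx (by rw [sum_single_add_single]; omega)]
      exact mem_union_right _ ha

theorem IsForestMap.injective_single_add_single (hf : IsForestMap f) :
    Injective fun v => (Pi.single v 1 + Pi.single (f v) 1 : Fin m → ℕ) := by
  intro v w h
  rcases single_add_single_eq_iff.mp h with ⟨hvw, -⟩ | ⟨hv, hw⟩
  · exact hvw
  · have : f (f w) = w := by rw [← hv, hw]
    exact hv.trans (hf.eq_of_apply_apply_eq this)

theorem IsForestMap.card_forestDiagram (hf : IsForestMap f) :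
    #(forestDiagram f) = 2 * m + 1 := by
  rw [← card_sdiff_add_card_eq_card (mu_subset_forestDiagram f), forestDiagram_sdiff_mu,
    card_image_of_injective _ hf.injective_single_add_single, card_univ, Fintype.card_fin,
    card_mu]
  ring

theorem touches_forestDiagram (f : Fin m → Fin m) (v : Fin m) :
    Touches (forestDiagram f \ mu m) v (f v) :=
  ⟨_, by rw [forestDiagram_sdiff_mu]; exact mem_image_of_mem _ (mem_univ v), by simp, by simp⟩

theorem IsForestMap.forestDiagram_blocks (hf : IsForestMap f) (B : Set (Fin m))
    (hB : IsBlock (forestDiagram f \ mu m) B) :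
    ∃ a ∈ forestDiagram f \ mu m, SuppIn a B ∧ ¬IsType1 a := by
  obtain ⟨v, rfl⟩ := hB
  set r := forestRoot f v
  refine ⟨Pi.single r 1 + Pi.single r 1, ?_, fun i hi => ?_,
    by simp [isType1_single_add_single]⟩
  · rw [forestDiagram_sdiff_mu]
    exact mem_image.mpr ⟨r, mem_univ r, by rw [hf.isFixedPt_forestRoot v]⟩
  obtain rfl : i = r := by
    by_contra h
    simp [h] at hi
  have horbit (n : ℕ) : Relation.EqvGen (Touches (forestDiagram f \ mu m)) v (f^[n] v) := by
    induction n with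
    | zero => exact .refl v
    | succ n ih =>
      rw [iterate_succ_apply']
      exact .trans _ _ _ ih (.rel _ _ (touches_forestDiagram f _))
  exact horbit _

theorem card_type2_forestDiagram (f : Fin m → Fin m) :
    Nat.card {a // a ∈ forestDiagram f \ mu m ∧ IsType2 a} = #(roots f) := by
  rw [← Nat.card_eq_finsetCard]
  refine (Nat.card_eq_of_bijective
    (fun v : roots f => (⟨Pi.single v.1 1 + Pi.single v.1 1, ?_, ?_⟩ :
      {a // a ∈ forestDiagram f \ mu m ∧ IsType2 a})) ⟨?_, ?_⟩).symm
  · rw [forestDiagram_sdiff_mu]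
    exact mem_image.mpr ⟨v, mem_univ _, by rw [mem_roots.mp v.2]⟩
  · exact isType2_single_add_single.mpr rfl
  · intro v w h
    apply Subtype.ext
    rcases single_add_single_eq_iff.mp (congrArg Subtype.val h) with ⟨h, -⟩ | ⟨h, -⟩ <;>
      exact h
  · rintro ⟨a, ha, h2⟩
    rw [forestDiagram_sdiff_mu] at ha
    obtain ⟨v, -, rfl⟩ := mem_image.mp ha
    have hv : v = f v := isType2_single_add_single.mp h2
    exact ⟨⟨v, mem_roots.mpr hv.symm⟩, Subtype.ext (by simp only; rw [← hv])⟩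

/-- Induction on the distance to the root: if `g` disagreed with `f` at `v`, the point
`e_v + e_{f v}` would have to be `e_w + e_{g w}` with `w = f v`, and `g (f v) = f (f v) = v`
would be a 2-cycle of `f`. -/
theorem IsForestMap.eq_of_forestDiagram_eq (hf : IsForestMap f)
    (h : forestDiagram g = forestDiagram f) : g = f := by
  have hpts (v : Fin m) : ∃ w, (Pi.single v 1 + Pi.single (f v) 1 : Fin m → ℕ) =
      Pi.single w 1 + Pi.single (g w) 1 := by
    have := mem_image_of_mem (fun v => (Pi.single v 1 + Pi.single (f v) 1 : Fin m → ℕ))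
      (mem_univ v)
    rw [← forestDiagram_sdiff_mu, ← h, forestDiagram_sdiff_mu] at this
    obtain ⟨w, -, hw⟩ := mem_image.mp this
    exact ⟨w, hw.symm⟩
  funext v
  obtain ⟨n, hn⟩ := hf v
  induction n generalizing v with
  | zero =>
    obtain ⟨w, hw⟩ := hpts v
    rw [show f v = v from hn] at hw ⊢
    rcases single_add_single_eq_iff.mp hw with ⟨rfl, h⟩ | ⟨h, rfl⟩ <;> exact h.symm
  | succ n ih =>
    have hfv := ih (f v) (by rwa [← iterate_succ_apply])
    obtain ⟨w, hw⟩ := hpts v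
    rcases single_add_single_eq_iff.mp hw with ⟨rfl, h⟩ | ⟨hv, rfl⟩
    · exact h.symm
    · have hfix := hf.eq_of_apply_apply_eq (hfv ▸ hv.symm)
      rw [hfix] at hv ⊢
      exact hv.symm

end ForestDiagram

section Structure

variable {m : ℕ} {F : Finset (Fin m → ℕ)}

def pairGraph (F : Finset (Fin m → ℕ)) : SimpleGraph (Fin m) where
  Adj i j := i ≠ j ∧ Pi.single i 1 + Pi.single j 1 ∈ F
  symm := ⟨fun i j h => ⟨h.1.symm, by rw [add_comm]; exact h.2⟩⟩
  loopless := ⟨fun i h => h.1 rfl⟩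

theorem IsFerrers.reachable_of_eqvGen_touches (hF : IsFerrers F) {i j : Fin m}
    (h : Relation.EqvGen (Touches (F \ mu m)) i j) : (pairGraph F).Reachable i j := by
  rw [← (pairGraph F).reachable_is_equivalence.eqvGen_iff]
  refine h.mono fun u v ⟨a, ha, hu, hv⟩ => ?_
  by_cases huv : u = v
  · rw [huv]
  · exact SimpleGraph.Adj.reachable
      ⟨huv, hF.2 a (mem_sdiff.mp ha).1 _ (single_add_single_le huv hu hv)⟩

theorem exists_three_ne_zero {a : Fin m → ℕ} {v : Fin m} (hle : ∀ i, a i ≤ 1)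
    (hμ : a ∉ mu m) (h1 : ¬IsType1 a) (hv : a v ≠ 0) :
    ∃ j k, j ≠ v ∧ k ≠ v ∧ j ≠ k ∧ a j ≠ 0 ∧ a k ≠ 0 := by
  by_contra! H
  by_cases hj : ∃ j ≠ v, a j ≠ 0
  · obtain ⟨j, hjv, hj⟩ := hj
    refine h1 ⟨v, j, hjv.symm, funext fun x => ?_⟩
    have := hle x
    by_cases hxv : x = v
    · subst hxv
      simp [hjv.symm]
      omega
    by_cases hxj : x = j
    · subst hxj
      simp [hxv]
      omega
    simp [hxv, hxj, H j x hjv hxv (Ne.symm hxj) hj]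
  · push Not at hj
    refine hμ (mem_mu_iff.mpr ?_)
    rw [Fintype.sum_eq_single v hj]
    exact hle v

variable {f : Fin m → Fin m} {mark : Fin m → Fin m → ℕ}

/-- The `m` points `e_v + e_{f v}` (`v` not a root) and `mark v` (`v` a root) are distinct points
of the `m`-point skew diagram, so they exhaust it. -/
theorem sdiff_mu_eq_image_ite (hcard : #(F \ mu m) = m) (hf : IsForestMap f)
    (hedge : ∀ v, f v ≠ v → Pi.single v 1 + Pi.single (f v) 1 ∈ F)
    (hmark : ∀ v, f v = v → mark v ∈ F \ mu m ∧ ¬IsType1 (mark v) ∧ mark v v ≠ 0)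
    (hsupp : ∀ v w, f v = v → f w = w → mark v w ≠ 0 → v = w) :
    F \ mu m = univ.image fun v =>
      if f v = v then mark v else Pi.single v 1 + Pi.single (f v) 1 := by
  set pt := fun v => if f v = v then mark v else (Pi.single v 1 + Pi.single (f v) 1 : Fin m → ℕ)
  have hmem (v : Fin m) : pt v ∈ F \ mu m := by
    by_cases hv : f v = v
    · simpa [pt, hv] using (hmark v hv).1
    · simpa [pt, hv] using ⟨hedge v hv, single_add_single_notMem_mu v (f v)⟩
  have hinj : Injective pt := by
    intro v w hvw
    by_cases hv : f v = v <;> by_cases hw : f w = w <;>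
      simp only [pt, hv, hw, if_true, if_false] at hvw
    · exact hsupp v w hv hw (hvw ▸ (hmark w hw).2.2)
    · exact absurd (isType1_single_add_single.mpr (Ne.symm hw)) (hvw ▸ (hmark v hv).2.1)
    · exact absurd (isType1_single_add_single.mpr (Ne.symm hv)) (hvw ▸ (hmark w hw).2.1)
    · exact hf.injective_single_add_single hvw
  refine (eq_of_subset_of_card_le (image_subset_iff.mpr fun v _ => hmem v) ?_).symm
  rw [card_image_of_injective _ hinj, hcard, card_univ, Fintype.card_fin]

/-- A marker with an entry `≥ 2` at `j` lies above the non-type-1 point `2 e_j`, which must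
itself be a marker; a `0/1` marker would lie above a triangle of type-1 points, i.e. of edges of
`f`. -/
theorem mark_eq_single_add_single (hF : IsFerrers F)
    (hsd : F \ mu m = univ.image fun v =>
      if f v = v then mark v else Pi.single v 1 + Pi.single (f v) 1)
    (hmark : ∀ v, f v = v → mark v ∈ F \ mu m ∧ ¬IsType1 (mark v) ∧ mark v v ≠ 0)
    (hsupp : ∀ v w, f v = v → f w = w → mark v w ≠ 0 → v = w) {v : Fin m} (hv : f v = v) :
    mark v = Pi.single v 1 + Pi.single v 1 := by
  have hmarker {b} (hb : b ∈ F \ mu m) (hb1 : ¬IsType1 b) : ∃ w, f w = w ∧ b = mark w := by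
    rw [hsd] at hb
    obtain ⟨w, -, rfl⟩ := mem_image.mp hb
    by_cases hw : f w = w
    · exact ⟨w, hw, by simp [hw]⟩
    · simp only [hw, if_false, isType1_single_add_single, not_not] at hb1
      exact absurd hb1.symm hw
  have htype1 {i j} (hij : i ≠ j) (h : Pi.single i 1 + Pi.single j 1 ∈ F) :
      f i = j ∨ f j = i := by
    have hmem := mem_sdiff.mpr ⟨h, single_add_single_notMem_mu i j⟩
    rw [hsd] at hmem
    obtain ⟨w, -, hw⟩ := mem_image.mp hmem
    by_cases hwf : f w = w
    · simp only [hwf, if_true] at hw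
      exact absurd (isType1_single_add_single.mpr hij) (hw ▸ (hmark w hwf).2.1)
    · simp only [hwf, if_false] at hw
      rcases single_add_single_eq_iff.mp hw with ⟨rfl, rfl⟩ | ⟨rfl, rfl⟩
      exacts [Or.inl rfl, Or.inr rfl]
  obtain ⟨ha, ha1, hav⟩ := hmark v hv
  have haF := (mem_sdiff.mp ha).1
  by_cases h2 : ∃ j, 2 ≤ mark v j
  · obtain ⟨j, hj⟩ := h2
    have hjj := mem_sdiff.mpr
      ⟨hF.2 _ haF _ (single_add_single_self_le hj), single_add_single_notMem_mu j j⟩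
    obtain ⟨w, hw, hjw⟩ := hmarker hjj (by simp [isType1_single_add_single])
    obtain rfl : w = j := by
      by_contra h
      exact (hmark w hw).2.2 (by simp [← hjw, Ne.symm h])
    rw [hsupp v w hv hw (by omega)]
    exact hjw.symm
  · push Not at h2
    obtain ⟨j, k, hjv, hkv, hjk, hj, hk⟩ :=
      exists_three_ne_zero (fun i => Nat.lt_succ_iff.mp (h2 i)) (mem_sdiff.mp ha).2 ha1 hav
    have hpair {i l} (hil : i ≠ l) (hi : mark v i ≠ 0) (hl : mark v l ≠ 0) :
        f i = l ∨ f l = i :=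
      htype1 hil (hF.2 _ haF _ (single_add_single_le hil hi hl))
    have hfj : f j = v := (hpair (Ne.symm hjv) hav hj).resolve_left (by rw [hv]; exact hjv.symm)
    have hfk : f k = v := (hpair (Ne.symm hkv) hav hk).resolve_left (by rw [hv]; exact hkv.symm)
    rcases hpair hjk hj hk with h | h
    · exact absurd (hfj ▸ h) (Ne.symm hkv)
    · exact absurd (hfk ▸ h) (Ne.symm hjv)

theorem IsFerrers.exists_forestDiagram_eq (hF : IsFerrers F) (hμ : mu m ⊆ F)
    (hcard : #F = 2 * m + 1)
    (hblk : ∀ B : Set (Fin m), IsBlock (F \ mu m) B →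
      ∃ a ∈ F \ mu m, SuppIn a B ∧ ¬IsType1 a) :
    ∃ f, IsForestMap f ∧ forestDiagram f = F := by
  set G := pairGraph F
  have hcomp (c : G.ConnectedComponent) : ∃ a ∈ F \ mu m, ¬IsType1 a ∧
      ∃ r, a r ≠ 0 ∧ ∀ j, a j ≠ 0 → G.connectedComponentMk j = c := by
    induction c using SimpleGraph.ConnectedComponent.ind with | h v => ?_
    obtain ⟨a, ha, hsupp, ha1⟩ := hblk _ ⟨v, rfl⟩
    obtain ⟨r, hr⟩ : ∃ r, a r ≠ 0 := by
      by_contra! h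
      exact (mem_sdiff.mp ha).2 (by rw [funext h]; exact mem_insert_self _ _)
    exact ⟨a, ha, ha1, r, hr, fun j hj =>
      (SimpleGraph.ConnectedComponent.sound (hF.reachable_of_eqvGen_touches (hsupp j hj))).symm⟩
  choose mark hmark hmark1 root hroot hsupp using hcomp
  have hroot_mk (c : G.ConnectedComponent) : G.connectedComponentMk (root c) = c :=
    hsupp c _ (hroot c)
  obtain ⟨f, hf, hfR, hfadj⟩ := G.exists_isForestMap (Set.range root) fun v =>
    ⟨_, ⟨_, rfl⟩, SimpleGraph.ConnectedComponent.exact (hroot_mk _).symm⟩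
  have hfix {v} (hv : f v = v) : root (G.connectedComponentMk v) = v := by
    by_contra h
    exact (hfadj v fun ⟨c, hc⟩ => h (by rw [← hc, hroot_mk])).ne hv.symm
  have hmark' (v) (hv : f v = v) : mark (G.connectedComponentMk v) ∈ F \ mu m ∧
      ¬IsType1 (mark (G.connectedComponentMk v)) ∧ mark (G.connectedComponentMk v) v ≠ 0 :=
    ⟨hmark _, hmark1 _, by simpa only [hfix hv] using hroot (G.connectedComponentMk v)⟩
  have hsupp' (v w) (hv : f v = v) (hw : f w = w) (h : mark (G.connectedComponentMk v) w ≠ 0) :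
      v = w := by
    rw [← hfix hv, ← hfix hw, hsupp _ w h]
  have hedge (v) (hv : f v ≠ v) : Pi.single v 1 + Pi.single (f v) 1 ∈ F :=
    (hfadj v fun ⟨c, hc⟩ => hv (hc ▸ hfR _ ⟨c, rfl⟩)).2
  have hsd := sdiff_mu_eq_image_ite (by rw [card_sdiff_of_subset hμ, hcard, card_mu]; omega) hf
    hedge hmark' hsupp'
  refine ⟨f, hf, ?_⟩
  rw [forestDiagram, ← union_sdiff_of_subset hμ, hsd]
  congr 2
  funext v
  split_ifs with hv
  · rw [mark_eq_single_add_single hF hsd hmark' hsupp' hv, hv]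
  · rfl

end Structure

theorem statement15_general (m α : ℕ) (hα : 1 ≤ α) (hαm : α ≤ m) :
    Nat.card {F : Finset (Fin m → ℕ) //
      IsFerrers F ∧ mu m ⊆ F ∧ F.card = 2 * m + 1 ∧
      (∀ B : Set (Fin m), IsBlock (F \ mu m) B →
        ∃ a ∈ F \ mu m, SuppIn a B ∧ ¬ IsType1 a) ∧
      Nat.card {a : Fin m → ℕ // a ∈ F \ mu m ∧ IsType2 a} = α} =
    Nat.choose (m - 1) (α - 1) * m ^ (m - α) := by
  have hcount := card_forestMaps (V := Fin m) hα (by rwa [Fintype.card_fin])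
  rw [Fintype.card_fin] at hcount
  rw [← hcount, ← Nat.card_eq_finsetCard]
  symm
  refine Nat.card_eq_of_bijective (fun f => ⟨forestDiagram f.1, ?_⟩) ⟨?_, ?_⟩
  · obtain ⟨hf, hk⟩ := mem_forestMaps.mp f.2
    exact ⟨isFerrers_forestDiagram _, mu_subset_forestDiagram _, hf.card_forestDiagram,
      hf.forestDiagram_blocks, by rw [card_type2_forestDiagram, hk]⟩
  · intro f g h
    exact Subtype.ext ((mem_forestMaps.mp f.2).1.eq_of_forestDiagram_eq
      (congrArg Subtype.val h).symm).symm
  · rintro ⟨F, hF, hμ, hcard, hblk, htype2⟩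
    obtain ⟨f, hf, rfl⟩ := hF.exists_forestDiagram_eq hμ hcard hblk
    refine ⟨⟨f, mem_forestMaps.mpr ⟨hf, ?_⟩⟩, rfl⟩
    rw [← card_type2_forestDiagram, htype2]

/-- for `1 ≤ α ≤ m`, the number of Ferrers diagrams `λ ⊆ ℕ^m` with `2m+1`
elements containing `μ_m`, every component of `λ ∖ μ_m` containing a non-type-1 element,
and exactly `α` elements of type 2 in `λ ∖ μ_m`, equals `C(m−1, α−1) · m^(m−α)`. -/
theorem statement15 (m α : ℕ) (hm : 1 ≤ m) (hα : 1 ≤ α) (hαm : α ≤ m) :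
    Nat.card {F : Finset (Fin m → ℕ) //
      IsFerrers F ∧ mu m ⊆ F ∧ F.card = 2 * m + 1 ∧
      (∀ B : Set (Fin m), IsBlock (F \ mu m) B →
        ∃ a ∈ F \ mu m, SuppIn a B ∧ ¬ IsType1 a) ∧
      Nat.card {a : Fin m → ℕ // a ∈ F \ mu m ∧ IsType2 a} = α} =
    Nat.choose (m - 1) (α - 1) * m ^ (m - α) :=
  statement15_general m α hα hαm
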